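/- arXiv:1611.00417 — 13 statements merged into one kernel-verified Lean document; each statement's English description precedes it below -/
import Mathlib

section
/- If N is a positive integer dividing 2^N + 1, then M = 2^N + 1 also divides 2^M + 1. -/
theorem novak_map (N : ℕ) (hN : 0 < N) (h : N ∣ 2 ^ N + 1) :
    (2 ^ N + 1) ∣ 2 ^ (2 ^ N + 1) + 1 := by
  obtain ⟨k, hk⟩ := h
  have hodd : Odd (2 ^ N + 1) := by
    simp [Nat.odd_add_one, Nat.even_pow, hN.ne']
  have hk_odd : Odd k := by
    rw [hk] at hodd
    exact (Nat.odd_mul.mp hodd).2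
  have := hk_odd.nat_add_dvd_pow_add_pow (2 ^ N) 1
  rw [one_pow, ← pow_mul, ← hk] at this
  exact this
end

section
/- If N and M are Novák numbers, then gcd(N, M) is a Novák number. -/
theorem novak_gcd (N M : ℕ) (hN : 0 < N) (hM : 0 < M)
    (hn : N ∣ 2 ^ N + 1) (hm : M ∣ 2 ^ M + 1) :
    Nat.gcd N M ∣ 2 ^ Nat.gcd N M + 1 := by
  set d := Nat.gcd N M with hd
  have hdN : d ∣ N := Nat.gcd_dvd_left N M
  have hdM : d ∣ M := Nat.gcd_dvd_right N M
  have hdpos : 0 < d := Nat.gcd_pos_of_pos_left M hN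
  -- N and M are odd
  have hNodd : Odd N := by
    rcases Nat.even_or_odd N with h | h
    · exfalso
      have h2 : 2 ∣ N := h.two_dvd
      have : (2 : ℕ) ∣ 2 ^ N + 1 := h2.trans hn
      have hpow : (2 : ℕ) ∣ 2 ^ N := dvd_pow_self 2 hN.ne'
      omega
    · exact h
  have hModd : Odd M := by
    rcases Nat.even_or_odd M with h | h
    · exfalso
      have h2 : 2 ∣ M := h.two_dvd
      have : (2 : ℕ) ∣ 2 ^ M + 1 := h2.trans hm
      have hpow : (2 : ℕ) ∣ 2 ^ M := dvd_pow_self 2 hM.ne'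
      omega
    · exact h
  set a := N / d with ha
  set b := M / d with hb
  have hNa : N = d * a := (Nat.div_mul_cancel hdN).symm.trans (mul_comm a d)
  have hMb : M = d * b := (Nat.div_mul_cancel hdM).symm.trans (mul_comm b d)
  have haodd : Odd a := by
    rcases Nat.even_or_odd a with h | h
    · exfalso; rw [hNa] at hNodd; exact (Nat.not_odd_iff_even.mpr (h.mul_left d)) hNodd
    · exact h
  have hbodd : Odd b := by
    rcases Nat.even_or_odd b with h | h
    · exfalso; rw [hMb] at hModd; exact (Nat.not_odd_iff_even.mpr (h.mul_left d)) hModd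
    · exact h
  have hab : Nat.gcd a b = 1 := Nat.coprime_div_gcd_div_gcd hdpos
  -- work in ZMod d
  have hdn : d ∣ 2 ^ N + 1 := hdN.trans hn
  have hdm : d ∣ 2 ^ M + 1 := hdM.trans hm
  have key : ∀ k : ℕ, d ∣ 2 ^ k + 1 → ((2 : ZMod d) ^ k = -1) := by
    intro k hk
    have : ((2 ^ k + 1 : ℕ) : ZMod d) = 0 := (ZMod.natCast_eq_zero_iff _ _).mpr hk
    push_cast at this
    linear_combination this
  have hxa : ((2 : ZMod d) ^ d) ^ a = -1 := by
    rw [← pow_mul, ← hNa]; exact key N hdn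
  have hxb : ((2 : ZMod d) ^ d) ^ b = -1 := by
    rw [← pow_mul, ← hMb]; exact key M hdm
  set x : ZMod d := (2 : ZMod d) ^ d with hx
  have hx2a : x ^ (2 * a) = 1 := by
    rw [mul_comm, pow_mul, hxa]; ring
  have hx2b : x ^ (2 * b) = 1 := by
    rw [mul_comm, pow_mul, hxb]; ring
  have hord : orderOf x ∣ 2 := by
    have h1 := orderOf_dvd_of_pow_eq_one hx2a
    have h2 := orderOf_dvd_of_pow_eq_one hx2b
    have := Nat.dvd_gcd h1 h2
    rwa [Nat.gcd_mul_left, hab, mul_one] at this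
  have hx2 : x ^ 2 = 1 := orderOf_dvd_iff_pow_eq_one.mp hord
  obtain ⟨c, hc⟩ := haodd
  have hxeq : x = -1 := by
    calc x = (x ^ 2) ^ c * x := by rw [hx2]; ring
    _ = x ^ a := by rw [← pow_mul, ← pow_succ, hc]
    _ = -1 := hxa
  -- conclude
  have : ((2 ^ d + 1 : ℕ) : ZMod d) = 0 := by
    push_cast
    rw [← hx, hxeq]; ring
  exact (ZMod.natCast_eq_zero_iff _ _).mp this
end

section
/- If N and M are Novák numbers, then lcm(N, M) is a Novák number. -/
lemma novak_dvd_of_odd_mul {n k : ℕ} (hn : n ∣ 2 ^ n + 1) (hk : Odd k) :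
    n ∣ 2 ^ (n * k) + 1 := by
  have h : 2 ^ n + 1 ∣ (2 ^ n) ^ k + 1 ^ k := Odd.nat_add_dvd_pow_add_pow _ _ hk
  rw [pow_mul]
  simpa using hn.trans h

theorem novak_lcm (N M : ℕ) (hN : 0 < N) (hM : 0 < M)
    (hn : N ∣ 2 ^ N + 1) (hm : M ∣ 2 ^ M + 1) :
    Nat.lcm N M ∣ 2 ^ Nat.lcm N M + 1 := by
  have hNodd : Odd N :=
    (Even.add_one ((Nat.even_pow' hN.ne').mpr even_two)).of_dvd_nat hn
  have hModd : Odd M :=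
    (Even.add_one ((Nat.even_pow' hM.ne').mpr even_two)).of_dvd_nat hm
  have hLodd : Odd (Nat.lcm N M) :=
    (hNodd.mul hModd).of_dvd_nat (Nat.lcm_dvd_mul N M)
  obtain ⟨k, hk⟩ := Nat.dvd_lcm_left N M
  obtain ⟨j, hj⟩ := Nat.dvd_lcm_right N M
  have hkodd : Odd k := by
    rcases Nat.even_or_odd k with h | h
    · exact absurd (hk ▸ h.mul_left N) (Nat.not_even_iff_odd.mpr hLodd)
    · exact h
  have hjodd : Odd j := by
    rcases Nat.even_or_odd j with h | h
    · exact absurd (hj ▸ h.mul_left M) (Nat.not_even_iff_odd.mpr hLodd)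
    · exact h
  exact Nat.lcm_dvd (hk ▸ novak_dvd_of_odd_mul hn hkodd)
    (hj ▸ novak_dvd_of_odd_mul hm hjodd)
end

section
/- If N and M are odd positive integers, then gcd(2^N + 1, 2^M + 1) = 2^gcd(N,M) + 1. -/
/-! Write `g = gcd N M`. Since `N / g` and `M / g` are odd, `2^g + 1` divides both `2^N + 1` and
`2^M + 1`. Conversely, a common divisor `d` of `2^N + 1` and `2^M + 1` divides `2^(2N) - 1` and
`2^(2M) - 1`, hence their gcd `2^(2g) - 1 = (2^g + 1)(2^g - 1)`. But `d` is coprime to `2^g - 1`,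
a divisor of `2^N - 1`, because `2^N + 1` and `2^N - 1` are odd and differ by `2`. -/

namespace Nat

theorem pow_add_one_dvd_pow_add_one_of_dvd (a : ℕ) {n m : ℕ} (hm : Odd m) (hnm : n ∣ m) :
    a ^ n + 1 ∣ a ^ m + 1 := by
  obtain ⟨k, rfl⟩ := hnm
  simpa [pow_mul] using (Odd.of_mul_right hm).nat_add_dvd_pow_add_pow (a ^ n) 1

theorem pow_two_mul_sub_one (a n : ℕ) : a ^ (2 * n) - 1 = (a ^ n + 1) * (a ^ n - 1) := by
  rw [mul_comm, pow_mul, ← Nat.sq_sub_sq, one_pow]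

theorem pow_add_one_dvd_pow_two_mul_sub_one (a n : ℕ) : a ^ n + 1 ∣ a ^ (2 * n) - 1 :=
  pow_two_mul_sub_one a n ▸ dvd_mul_right _ _

theorem coprime_add_one_sub_one_of_even {x : ℕ} (hx : Even x) : Coprime (x + 1) (x - 1) := by
  have hgcd_dvd_two : gcd (x + 1) (x - 1) ∣ 2 := by
    rcases eq_zero_or_pos x with rfl | hpos
    · simp
    · have := Nat.dvd_sub (gcd_dvd_left (x + 1) (x - 1)) (gcd_dvd_right _ _)
      rwa [show x + 1 - (x - 1) = 2 by omega] at this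
  exact (hx.add_one.coprime_two_right.coprime_dvd_left (gcd_dvd_left _ _)).eq_one_of_dvd
    hgcd_dvd_two

theorem coprime_pow_add_one_pow_sub_one_of_dvd {a g N : ℕ} (ha : Even a) (hN : N ≠ 0)
    (hg : g ∣ N) : Coprime (a ^ N + 1) (a ^ g - 1) :=
  (coprime_add_one_sub_one_of_even ((even_pow' hN).2 ha)).coprime_dvd_right
    (pow_sub_one_dvd_pow_sub_one a hg)

end Nat

theorem gcd_two_pow_add_one_general (N M : ℕ)
    (hNodd : Odd N) (hModd : Odd M) :
    Nat.gcd (2 ^ N + 1) (2 ^ M + 1) = 2 ^ Nat.gcd N M + 1 := by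
  apply Nat.dvd_antisymm
  · have hdvd : Nat.gcd (2 ^ N + 1) (2 ^ M + 1) ∣
        (2 ^ Nat.gcd N M + 1) * (2 ^ Nat.gcd N M - 1) := by
      rw [← Nat.pow_two_mul_sub_one, ← Nat.gcd_mul_left, ← Nat.pow_sub_one_gcd_pow_sub_one]
      exact Nat.dvd_gcd
        ((Nat.gcd_dvd_left _ _).trans (Nat.pow_add_one_dvd_pow_two_mul_sub_one 2 N))
        ((Nat.gcd_dvd_right _ _).trans (Nat.pow_add_one_dvd_pow_two_mul_sub_one 2 M))
    have hcop : Nat.Coprime (Nat.gcd (2 ^ N + 1) (2 ^ M + 1)) (2 ^ Nat.gcd N M - 1) :=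
      (Nat.coprime_pow_add_one_pow_sub_one_of_dvd even_two hNodd.pos.ne'
        (Nat.gcd_dvd_left N M)).coprime_dvd_left (Nat.gcd_dvd_left _ _)
    exact hcop.dvd_of_dvd_mul_right hdvd
  · exact Nat.dvd_gcd (Nat.pow_add_one_dvd_pow_add_one_of_dvd 2 hNodd (Nat.gcd_dvd_left N M))
      (Nat.pow_add_one_dvd_pow_add_one_of_dvd 2 hModd (Nat.gcd_dvd_right N M))

theorem gcd_two_pow_add_one (N M : ℕ) (hN : 0 < N) (hM : 0 < M)
    (hNodd : Odd N) (hModd : Odd M) :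
    Nat.gcd (2 ^ N + 1) (2 ^ M + 1) = 2 ^ Nat.gcd N M + 1 :=
  gcd_two_pow_add_one_general N M hNodd hModd
end

section
/- If N is a Novák number and p is a prime dividing 2^N + 1, then Np is a Novák number, i.e., Np divides 2^(Np) + 1. -/
theorem novak_mul_prime (N p : ℕ) (hN : 0 < N) (h : N ∣ 2 ^ N + 1)
    (hp : p.Prime) (hpd : p ∣ 2 ^ N + 1) :
    N * p ∣ 2 ^ (N * p) + 1 := by
  -- p is odd
  have hodd : Odd (2 ^ N + 1) := by
    have : Even (2 ^ N) := (Nat.even_pow' hN.ne').mpr even_two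
    simpa using this.add_one
  have hp2 : p ≠ 2 := by
    rintro rfl
    exact (Nat.not_even_iff_odd.mpr hodd) ((even_iff_two_dvd).mpr hpd)
  have hpodd : Odd p := hp.odd_of_ne_two hp2
  -- work in ℤ
  suffices hkey : ((2 ^ N + 1) * p : ℕ) ∣ 2 ^ (N * p) + 1 by
    exact dvd_trans (mul_dvd_mul_right h p) hkey
  rw [← Int.natCast_dvd_natCast]
  push_cast
  set a : ℤ := 2 ^ N with ha
  set Q : ℤ := ∑ i ∈ Finset.range p, (-a) ^ i with hQ
  have hfac : (a + 1) * Q = 2 ^ (N * p) + 1 := by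
    have := geom_sum_mul (-a) p
    have hop : (-a) ^ p = -(a ^ p) := hpodd.neg_pow a
    rw [hop] at this
    have : Q * (-a - 1) = -(a ^ p) - 1 := this
    have h2 : (a + 1) * Q = a ^ p + 1 := by linarith [this, mul_comm Q (-a - 1)]
    rw [h2, ha, pow_mul]
  have hpQ : (p : ℤ) ∣ Q := by
    have hpa : (p : ℤ) ∣ a + 1 := by
      rw [ha]
      exact_mod_cast Int.natCast_dvd_natCast.mpr hpd
    haveI : NeZero p := ⟨hp.ne_zero⟩
    have : ((Q : ℤ) : ZMod p) = 0 := by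
      have hA : ((a : ℤ) : ZMod p) = -1 := by
        have : ((a + 1 : ℤ) : ZMod p) = 0 := by
          exact_mod_cast (ZMod.intCast_zmod_eq_zero_iff_dvd _ _).mpr hpa
        push_cast at this
        linear_combination this
      rw [hQ]
      push_cast
      rw [hA]
      simp [Finset.sum_const, CharP.cast_eq_zero]
    exact (ZMod.intCast_zmod_eq_zero_iff_dvd _ _).mp this
  obtain ⟨c, hc⟩ := hpQ
  exact ⟨c, by rw [← hfac, hc]; ring⟩
end

section
/- If N is a Novák number, p_1, ..., p_k are primes each dividing 2^N + 1, and α_1, ..., α_k are nonnegative integers, then N · p_1^{α_1} · ... · p_k^{α_k} is a Novák number. -/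
private lemma novak_step (M q : ℕ) (hM0 : 0 < M) (hq : q.Prime)
    (hd : q ∣ 2 ^ M + 1) (hM : M ∣ 2 ^ M + 1) :
    (M * q) ∣ 2 ^ (M * q) + 1 ∧ 2 ^ M + 1 ∣ 2 ^ (M * q) + 1 := by
  have hodd2 : Odd (2 ^ M + 1) := by
    have : Even (2 ^ M) := by
      exact (Nat.even_pow).mpr ⟨even_two, hM0.ne'⟩
    simpa using this.add_one
  have hqodd : Odd q := by
    rcases hq.eq_two_or_odd' with rfl | h
    · exact absurd (hodd2) (by simpa using (even_iff_two_dvd.mpr hd))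
    · exact h
  set a : ℤ := 2 ^ M with ha
  have key : a ^ q + 1 = (∑ i ∈ Finset.range q, (-a) ^ i) * (a + 1) := by
    have := geom_sum_mul (-a) q
    have hneg : (-a) ^ q = -(a ^ q) := hqodd.neg_pow a
    rw [hneg] at this
    linarith [this]
  have hqS : (q : ℤ) ∣ (∑ i ∈ Finset.range q, (-a) ^ i) := by
    have : ((∑ i ∈ Finset.range q, (-a) ^ i : ℤ) : ZMod q) = 0 := by
      push_cast
      have haq : ((a : ℤ) : ZMod q) = -1 := by
        have : ((2 ^ M + 1 : ℕ) : ZMod q) = 0 := by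
          exact_mod_cast (ZMod.natCast_eq_zero_iff _ _).mpr hd
        push_cast at this
        push_cast [ha]
        linear_combination this
      rw [haq]
      simp [Finset.sum_congr rfl, neg_neg, one_pow]
    exact_mod_cast (ZMod.intCast_zmod_eq_zero_iff_dvd _ _).mp this
  have hMa : (M : ℤ) ∣ a + 1 := by
    have := Int.natCast_dvd_natCast.mpr hM
    push_cast at this
    simpa [ha] using this
  have h1 : ((M : ℤ) * q) ∣ a ^ q + 1 := by
    rw [key, mul_comm (M : ℤ)]
    exact mul_dvd_mul hqS hMa
  have h2 : (a + 1) ∣ a ^ q + 1 := by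
    rw [key]; exact dvd_mul_left _ _
  constructor
  · have : ((M * q : ℕ) : ℤ) ∣ ((2 ^ (M * q) + 1 : ℕ) : ℤ) := by
      push_cast
      rw [pow_mul, ← ha]
      exact_mod_cast h1
    exact_mod_cast this
  · have : ((2 ^ M + 1 : ℕ) : ℤ) ∣ ((2 ^ (M * q) + 1 : ℕ) : ℤ) := by
      push_cast
      rw [pow_mul, ← ha]
      exact h2
    exact_mod_cast this

private lemma novak_aux (N : ℕ) (hN : 0 < N) (h : N ∣ 2 ^ N + 1) :
    ∀ m : ℕ, 0 < m → (∀ q : ℕ, q.Prime → q ∣ m → q ∣ 2 ^ N + 1) →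
      (N * m) ∣ 2 ^ (N * m) + 1 ∧ 2 ^ N + 1 ∣ 2 ^ (N * m) + 1 := by
  intro m
  induction m using Nat.strong_induction_on with
  | _ m ih =>
    intro hm0 hprimes
    rcases eq_or_lt_of_le (Nat.one_le_iff_ne_zero.mpr hm0.ne') with h1 | h1
    · simp [← h1, h]
    · have hq : m.minFac.Prime := Nat.minFac_prime (by omega)
      obtain ⟨m', hm'eq⟩ : m.minFac ∣ m := Nat.minFac_dvd m
      have hm'0 : 0 < m' := Nat.pos_of_ne_zero (by
        rintro rfl; simp at hm'eq; omega)
      have hm'lt : m' < m := by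
        have h2 := hq.two_le
        rw [hm'eq]
        calc m' = 1 * m' := (one_mul m').symm
          _ < m.minFac * m' := (Nat.mul_lt_mul_right hm'0).mpr (by omega)
      obtain ⟨hA, hB⟩ := ih m' hm'lt hm'0
        (fun r hr hrd => hprimes r hr (hm'eq ▸ hrd.mul_left m.minFac))
      have hqN : m.minFac ∣ 2 ^ (N * m') + 1 :=
        (hprimes m.minFac hq (Nat.minFac_dvd m)).trans hB
      have hMpos : 0 < N * m' := Nat.mul_pos hN hm'0
      obtain ⟨hC, hD⟩ := novak_step (N * m') m.minFac hMpos hq hqN hA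
      constructor <;>
        rw [hm'eq, show N * (m.minFac * m') = N * m' * m.minFac by ring]
      · exact hC
      · exact hB.trans hD

theorem novak_mul_prime_powers (N k : ℕ) (hN : 0 < N) (h : N ∣ 2 ^ N + 1)
    (p : Fin k → ℕ) (hp : ∀ i, (p i).Prime) (hpd : ∀ i, p i ∣ 2 ^ N + 1)
    (α : Fin k → ℕ) :
    (N * ∏ i, p i ^ α i) ∣ 2 ^ (N * ∏ i, p i ^ α i) + 1 := by
  have hpos : 0 < ∏ i, p i ^ α i :=
    Finset.prod_pos fun i _ => pow_pos (hp i).pos _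
  refine (novak_aux N hN h _ hpos ?_).1
  intro q hq hqd
  obtain ⟨i, _, hi⟩ := hq.prime.exists_mem_finset_dvd hqd
  have : q ∣ p i := hq.dvd_of_dvd_pow hi
  have : q = p i := ((Nat.prime_dvd_prime_iff_eq hq (hp i)).mp this)
  rw [this]; exact hpd i
end

section
/- Let p be an odd prime, a and b integers not divisible by p with p dividing a - b, and k a positive integer. Then the p-adic valuation of a^k - b^k equals the p-adic valuation of a - b plus the p-adic valuation of k. -/
theorem lifting_the_exponent_general (p : ℕ) (hp : p.Prime) (hodd : Odd p)
    (a b : ℤ) (ha : ¬ (p : ℤ) ∣ a)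
    (hab : (p : ℤ) ∣ a - b) (k : ℕ) (hk : 0 < k) :
    emultiplicity (p : ℤ) (a ^ k - b ^ k) =
      emultiplicity (p : ℤ) (a - b) + (padicValNat p k : ℕ∞) := by
  rw [Int.emultiplicity_pow_sub_pow hp hodd hab ha k,
    padicValNat_eq_emultiplicity_of_ne_one hp.ne_one hk.ne']

theorem lifting_the_exponent (p : ℕ) (hp : p.Prime) (hodd : Odd p)
    (a b : ℤ) (ha : ¬ (p : ℤ) ∣ a) (hb : ¬ (p : ℤ) ∣ b)
    (hab : (p : ℤ) ∣ a - b) (k : ℕ) (hk : 0 < k) :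
    emultiplicity (p : ℤ) (a ^ k - b ^ k) =
      emultiplicity (p : ℤ) (a - b) + (padicValNat p k : ℕ∞) :=
  lifting_the_exponent_general p hp hodd a b ha hab k hk
end

section
/- If N is a Novák number with N > 1 and p is an odd prime dividing 2^N + 1, then p^(ν_p(N) + 1) divides 2^(Np) + 1, where ν_p(N) is the p-adic valuation of N. -/
theorem novak_prime_power_dvd (N p : ℕ) (hN : 1 < N) (h : N ∣ 2 ^ N + 1)
    (hp : p.Prime) (hpodd : Odd p) (hpd : p ∣ 2 ^ N + 1) :
    p ^ (padicValNat p N + 1) ∣ 2 ^ (N * p) + 1 := by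
  haveI : Fact p.Prime := ⟨hp⟩
  have hx : ¬ p ∣ 2 ^ N := by
    intro hd
    have h2 : p ∣ 2 := hp.dvd_of_dvd_pow hd
    rw [(Nat.prime_dvd_prime_iff_eq hp Nat.prime_two).mp h2] at hpodd
    exact (Nat.not_odd_iff_even.mpr even_two) hpodd
  have key : padicValNat p (2 ^ (N * p) + 1)
      = padicValNat p (2 ^ N + 1) + padicValNat p p := by
    have := padicValNat.pow_add_pow (p := p) (x := 2 ^ N) (y := 1) hpodd hpd hx (n := p) hpodd
    simpa [← pow_mul, one_pow] using this
  have hvp : padicValNat p p = 1 := padicValNat.self hp.one_lt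
  have hle : padicValNat p N ≤ padicValNat p (2 ^ N + 1) :=
    (padicValNat_dvd_iff_le (by positivity)).mp (pow_padicValNat_dvd.trans h)
  calc p ^ (padicValNat p N + 1) ∣ p ^ (padicValNat p (2 ^ (N * p) + 1)) := by
        apply pow_dvd_pow; omega
    _ ∣ 2 ^ (N * p) + 1 := pow_padicValNat_dvd
end

section
/- For every odd positive integer N, the number of distinct prime factors of 2^N + 1 is at least τ(N) - 1, where τ(N) is the number of divisors of N. -/
/-!
The core is Bang's theorem (Zsigmondy for `2 ^ n - 1`): for `n ≥ 2`, `n ≠ 6`, some prime `p` has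
`orderOf (2 : ZMod p) = n`. Such a prime for `n = 2 * d` divides `2 ^ d + 1`, hence `2 ^ N + 1`
whenever `d ∣ N`, and the order recovers `d`; so every divisor `d ≠ 3` of `N` yields its own
prime factor of `2 ^ N + 1`.

For Bang's theorem, suppose no prime factor of `Φ_n(2)` is primitive. A prime `p ∣ Φ_n(2)` then
satisfies `n = p ^ k * orderOf 2` with `k ≥ 1` and `orderOf 2 ∣ p - 1`, so `p` is the largest prime
factor of `n`; hence `p` is the only prime factor of `Φ_n(2)`, and since `p ^ 2 ∤ Φ_n(2)` (lifting
the exponent), `Φ_n(2) = p`. With `m = orderOf 2` and `y = 2 ^ p ^ (k - 1)` this reads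
`Φ_m(y ^ p) = p * Φ_m(y)`, which the bounds `(y - 1) ^ φ(m) < Φ_m(y) ≤ (y + 1) ^ φ(m)` rule out
except for `p = 3`, `y = 2`, `m = 2`, i.e. `n = 6`.
-/

open Polynomial Finset

namespace Polynomial

theorem cyclotomic_dvd_geom_sum_X_pow {d n : ℕ} (h : d ∈ n.properDivisors) :
    cyclotomic n ℤ ∣ ∑ i ∈ range (n / d), (X ^ d) ^ i := by
  have hd : 0 < d := Nat.pos_of_mem_properDivisors h
  have hne : (X ^ d - 1 : ℤ[X]) ≠ 0 := X_pow_sub_C_ne_zero hd 1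
  rw [← mul_dvd_mul_iff_left hne, mul_geom_sum, ← pow_mul,
    Nat.mul_div_cancel' (Nat.mem_properDivisors.1 h).1]
  exact X_pow_sub_one_mul_cyclotomic_dvd_X_pow_sub_one_of_dvd ℤ h

theorem cyclotomic_eval_dvd_pow_sub_one (n : ℕ) (a : ℤ) :
    (cyclotomic n ℤ).eval a ∣ a ^ n - 1 := by
  have := eval_dvd (x := a) (cyclotomic.dvd_X_pow_sub_one n ℤ)
  simpa only [eval_sub, eval_pow, eval_X, eval_one] using this

theorem intCast_cyclotomic_eval {R : Type*} [CommRing R] (n : ℕ) (a : ℤ) :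
    (((cyclotomic n ℤ).eval a : ℤ) : R) = (cyclotomic n R).eval (a : R) := by
  rw [← map_cyclotomic n (Int.castRingHom R), eval_intCast_map, eq_intCast, Int.cast_id]

theorem cyclotomic_prime_pow_mul_eval {R : Type*} [CommRing R] {p : ℕ} (hp : p.Prime)
    (k m : ℕ) (x : R) :
    (cyclotomic (p ^ (k + 1) * m) R).eval x = (cyclotomic (p * m) R).eval (x ^ p ^ k) := by
  induction k generalizing x with
  | zero => simp
  | succ k ih =>
    have hdvd : p ∣ p ^ (k + 1) * m := (dvd_pow_self p k.succ_ne_zero).mul_right m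
    rw [show p ^ (k + 1 + 1) * m = p ^ (k + 1) * m * p by ring,
      ← cyclotomic_expand_eq_cyclotomic hp hdvd, expand_eval, ih, ← pow_mul, ← pow_succ']

theorem cyclotomic_eval_pow_prime_eq {R : Type*} [CommRing R] {p m : ℕ} (hp : p.Prime)
    (hm : ¬p ∣ m) (x : R) :
    (cyclotomic m R).eval (x ^ p) = (cyclotomic (p * m) R).eval x * (cyclotomic m R).eval x := by
  rw [← expand_eval, cyclotomic_expand_eq_cyclotomic_mul hp hm, eval_mul, mul_comm m]

end Polynomial

theorem orderOf_eq_of_dvd_cyclotomic_eval {p k m : ℕ} {a : ℤ} (hp : p.Prime) (hm : ¬p ∣ m)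
    (hdvd : (p : ℤ) ∣ (cyclotomic (p ^ k * m) ℤ).eval a) : orderOf (a : ZMod p) = m := by
  have : Fact p.Prime := ⟨hp⟩
  have : NeZero (m : ZMod p) := ⟨by rwa [Ne, ZMod.natCast_eq_zero_iff]⟩
  have hroot : (cyclotomic (p ^ k * m) (ZMod p)).IsRoot (a : ZMod p) := by
    rwa [IsRoot, ← intCast_cyclotomic_eval, ZMod.intCast_zmod_eq_zero_iff_dvd]
  exact (isRoot_cyclotomic_prime_pow_mul_iff_of_charP.1 hroot).eq_orderOf.symm

theorem sq_not_dvd_cyclotomic_eval {p n : ℕ} {a : ℤ} (hp : p.Prime) (hodd : Odd p) (hpn : p ∣ n)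
    (hdvd : (p : ℤ) ∣ (cyclotomic n ℤ).eval a) : ¬(p : ℤ) ^ 2 ∣ (cyclotomic n ℤ).eval a := by
  have : Fact p.Prime := ⟨hp⟩
  obtain ⟨m, rfl⟩ := hpn
  have hm : m ∈ (p * m).properDivisors := by
    rcases m.eq_zero_or_pos with rfl | hm0
    · simp [Int.natCast_dvd_ofNat, hp.ne_one] at hdvd
    exact Nat.mem_properDivisors.2 ⟨dvd_mul_left m p, lt_mul_left hm0 hp.one_lt⟩
  have hx : (p : ℤ) ∣ a ^ m - 1 := by
    have h := hdvd.trans (cyclotomic_eval_dvd_pow_sub_one _ a)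
    rw [← ZMod.intCast_zmod_eq_zero_iff_dvd] at h ⊢
    push_cast at h ⊢
    rw [← ZMod.pow_card (_ ^ m), ← pow_mul, mul_comm]
    exact h
  have hpx : ¬(p : ℤ) ∣ a ^ m := fun h => by
    have := Int.eq_one_of_dvd_one (by positivity) ((dvd_sub_right h).1 hx)
    exact hp.one_lt.ne' (by exact_mod_cast this)
  have hgeom := emultiplicity_geom_sum₂_eq_one (Nat.prime_iff_prime_int.1 hp) hodd hx hpx
  simp only [one_pow, mul_one] at hgeom
  have hΦ := eval_dvd (x := a) (cyclotomic_dvd_geom_sum_X_pow hm)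
  simp only [eval_finsetSum, eval_pow, eval_X,
    Nat.mul_div_cancel _ (Nat.pos_of_mem_properDivisors hm)] at hΦ
  intro hsq
  have := pow_dvd_iff_le_emultiplicity.1 (hsq.trans hΦ)
  rw [hgeom] at this
  norm_num at this

theorem exists_eq_pow_mul_orderOf_of_dvd_cyclotomic_eval {p n : ℕ} {a : ℤ} (hp : p.Prime)
    (hdvd : (p : ℤ) ∣ (cyclotomic n ℤ).eval a) :
    ∃ k, n = p ^ k * orderOf (a : ZMod p) ∧ ¬p ∣ orderOf (a : ZMod p) := by
  have hn : n ≠ 0 := by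
    rintro rfl
    simp [Int.natCast_dvd_ofNat, hp.ne_one] at hdvd
  obtain ⟨k, m, hm, rfl⟩ := Nat.exists_eq_pow_mul_and_not_dvd hn p hp.ne_one
  rw [orderOf_eq_of_dvd_cyclotomic_eval hp hm hdvd]
  exact ⟨k, rfl, hm⟩

theorem orderOf_dvd_sub_one_of_dvd_cyclotomic_eval {p n : ℕ} {a : ℤ} (hp : p.Prime)
    (hdvd : (p : ℤ) ∣ (cyclotomic n ℤ).eval a) : orderOf (a : ZMod p) ∣ p - 1 := by
  have : Fact p.Prime := ⟨hp⟩
  obtain ⟨-, -, hord⟩ := exists_eq_pow_mul_orderOf_of_dvd_cyclotomic_eval hp hdvd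
  refine ZMod.orderOf_dvd_card_sub_one fun h => hord ?_
  rw [h, orderOf_zero]
  exact dvd_zero p

theorem lt_of_dvd_cyclotomic_eval {p r n : ℕ} {a : ℤ} (hp : p.Prime) (hr : r.Prime)
    (hdvd : (p : ℤ) ∣ (cyclotomic n ℤ).eval a) (hrn : r ∣ n) (hrp : r ≠ p) : r < p := by
  obtain ⟨k, hk, hord⟩ := exists_eq_pow_mul_orderOf_of_dvd_cyclotomic_eval hp hdvd
  have hr_ord : r ∣ orderOf (a : ZMod p) :=
    (((Nat.coprime_primes hr hp).2 hrp).pow_right k).dvd_of_dvd_mul_left (hk ▸ hrn)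
  have := Nat.le_of_dvd (Nat.sub_pos_of_lt hp.one_lt)
    (hr_ord.trans (orderOf_dvd_sub_one_of_dvd_cyclotomic_eval hp hdvd))
  have := hr.two_le
  omega

theorem eq_of_dvd_cyclotomic_eval {p q n : ℕ} {a : ℤ} (hp : p.Prime) (hq : q.Prime)
    (hpΦ : (p : ℤ) ∣ (cyclotomic n ℤ).eval a) (hqΦ : (q : ℤ) ∣ (cyclotomic n ℤ).eval a)
    (hpn : p ∣ n) (hqn : q ∣ n) : p = q := by
  by_contra hpq
  have := lt_of_dvd_cyclotomic_eval hp hq hpΦ hqn (Ne.symm hpq)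
  have := lt_of_dvd_cyclotomic_eval hq hp hqΦ hpn hpq
  omega

theorem natAbs_cyclotomic_eval_eq_of_forall_prime_dvd {p n : ℕ} {a : ℤ} (hp : p.Prime)
    (hodd : Odd p) (hpn : p ∣ n)
    (hpΦ : (p : ℤ) ∣ (cyclotomic n ℤ).eval a)
    (hall : ∀ q : ℕ, q.Prime → (q : ℤ) ∣ (cyclotomic n ℤ).eval a → q ∣ n) :
    ((cyclotomic n ℤ).eval a).natAbs = p := by
  obtain ⟨c, hc⟩ := Int.natCast_dvd.1 hpΦ
  suffices c = 1 by rw [hc, this, mul_one]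
  by_contra hc1
  obtain ⟨q, hq, hqc⟩ := Nat.exists_prime_and_dvd hc1
  have hqΦ : (q : ℤ) ∣ (cyclotomic n ℤ).eval a :=
    Int.natCast_dvd.2 (hc ▸ dvd_mul_of_dvd_right hqc p)
  obtain rfl := eq_of_dvd_cyclotomic_eval hq hp hqΦ hpΦ (hall q hq hqΦ) hpn
  refine sq_not_dvd_cyclotomic_eval hq hodd hpn hpΦ (Int.natCast_dvd.2 ?_)
  rw [hc, sq]
  exact mul_dvd_mul_left q hqc

theorem pow_lt_of_cyclotomic_eval_pow_eq {m p : ℕ} {y c : ℤ} (hm : 2 ≤ m) (hy : 2 ≤ y) (hc : 1 ≤ c)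
    (h : (cyclotomic m ℤ).eval (y ^ p) = c * (cyclotomic m ℤ).eval y) (hp : p ≠ 0) :
    y ^ p < c * (y + 1) + 1 := by
  have hR := congrArg (fun z : ℤ => (z : ℝ)) h
  simp only [Int.cast_mul, intCast_cyclotomic_eval, Int.cast_pow] at hR
  have hy' : (1 : ℝ) < y := by exact_mod_cast hy
  have hyp : (1 : ℝ) < (y : ℝ) ^ p := one_lt_pow₀ hy' hp
  have hc' : (1 : ℝ) ≤ c := by exact_mod_cast hc
  have hφ : m.totient ≠ 0 := (Nat.totient_pos.2 (by omega)).ne'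
  have key : ((y : ℝ) ^ p - 1) ^ m.totient < (c * (y + 1)) ^ m.totient :=
    calc ((y : ℝ) ^ p - 1) ^ m.totient < (cyclotomic m ℝ).eval ((y : ℝ) ^ p) :=
          sub_one_pow_totient_lt_cyclotomic_eval hm hyp
      _ = c * (cyclotomic m ℝ).eval (y : ℝ) := hR
      _ ≤ c * (y + 1) ^ m.totient := by
          gcongr; exact cyclotomic_eval_le_add_one_pow_totient hy' m
      _ ≤ c ^ m.totient * (y + 1) ^ m.totient := by
          gcongr; exact le_self_pow₀ hc' hφ
      _ = (c * (y + 1)) ^ m.totient := (mul_pow _ _ _).symm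
  have := lt_of_pow_lt_pow_left₀ m.totient (by positivity) key
  have : ((y ^ p : ℤ) : ℝ) < ((c * (y + 1) + 1 : ℤ) : ℝ) := by push_cast; linarith
  exact_mod_cast this

theorem eq_three_and_eq_two_of_pow_lt {p : ℕ} {y : ℤ} (hp : 3 ≤ p) (hy : 2 ≤ y)
    (h : y ^ p < p * (y + 1) + 1) : p = 3 ∧ y = 2 := by
  induction p, hp using Nat.le_induction with
  | base =>
    refine ⟨rfl, le_antisymm ?_ hy⟩
    by_contra! hy3
    push_cast at h
    have : 9 ≤ y * y := by nlinarith
    nlinarith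
  | succ p hp ih =>
    exfalso
    have hlt : y ^ p < p * (y + 1) + 1 := by
      by_contra! hge
      rw [pow_succ] at h
      push_cast at h
      have hp' : (3 : ℤ) ≤ p := by exact_mod_cast hp
      nlinarith [mul_le_mul_of_nonneg_left hy (pow_nonneg (by omega : (0 : ℤ) ≤ y) p)]
    obtain ⟨rfl, rfl⟩ := ih hlt
    norm_num at h

theorem eq_six_of_cyclotomic_eval_two_eq_prime {p k m : ℕ} (hp : p.Prime) (hm : 2 ≤ m)
    (hmp : m ∣ p - 1) (h : (cyclotomic (p ^ (k + 1) * m) ℤ).eval 2 = p) :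
    p ^ (k + 1) * m = 6 := by
  have hm_le := Nat.le_of_dvd (Nat.sub_pos_of_lt hp.one_lt) hmp
  have hpm : ¬p ∣ m := fun hpm => by have := Nat.le_of_dvd (by omega) hpm; omega
  have hexp : (cyclotomic m ℤ).eval ((2 ^ p ^ k) ^ p) = p * (cyclotomic m ℤ).eval (2 ^ p ^ k) := by
    rw [cyclotomic_eval_pow_prime_eq hp hpm, ← cyclotomic_prime_pow_mul_eval hp, h]
  have hy : (2 : ℤ) ≤ 2 ^ p ^ k := le_self_pow₀ (by norm_num) (pow_ne_zero k hp.ne_zero)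
  obtain ⟨rfl, hy2⟩ := eq_three_and_eq_two_of_pow_lt (by omega) hy
    (pow_lt_of_cyclotomic_eval_pow_eq hm hy (by exact_mod_cast hp.one_le) hexp hp.ne_zero)
  have hk : 3 ^ k = 1 := Nat.pow_right_injective le_rfl (by exact_mod_cast hy2 : 2 ^ 3 ^ k = 2 ^ 1)
  obtain rfl : k = 0 := by simpa using hk
  obtain rfl : m = 2 := by omega
  rfl

theorem exists_prime_orderOf_two_eq {n : ℕ} (hn : 2 ≤ n) (h6 : n ≠ 6) :
    ∃ p, p.Prime ∧ orderOf (2 : ZMod p) = n := by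
  by_contra! hne
  have hall : ∀ q : ℕ, q.Prime → (q : ℤ) ∣ (cyclotomic n ℤ).eval 2 → q ∣ n := by
    intro q hq hqΦ
    obtain ⟨k, hk, -⟩ := exists_eq_pow_mul_orderOf_of_dvd_cyclotomic_eval hq hqΦ
    rcases k with _ | k
    · exact absurd (by simpa using hk.symm) (hne q hq)
    · exact hk ▸ (dvd_pow_self q k.succ_ne_zero).mul_right _
  obtain ⟨p, hp, hpΦ⟩ := Nat.exists_prime_and_dvd
    (sub_one_lt_natAbs_cyclotomic_eval (n := n) (q := 2) (by omega) (by norm_num)).ne'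
  replace hpΦ : (p : ℤ) ∣ (cyclotomic n ℤ).eval 2 := by exact_mod_cast Int.natCast_dvd.2 hpΦ
  have : Fact p.Prime := ⟨hp⟩
  obtain ⟨k, hk, hpm⟩ := exists_eq_pow_mul_orderOf_of_dvd_cyclotomic_eval hp hpΦ
  have hmp := orderOf_dvd_sub_one_of_dvd_cyclotomic_eval hp hpΦ
  simp only [Int.cast_ofNat] at hk hpm hmp
  have hm : 2 ≤ orderOf (2 : ZMod p) := by
    have h0 : orderOf (2 : ZMod p) ≠ 0 := fun h => hpm (by rw [h]; exact dvd_zero p)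
    have h1 : orderOf (2 : ZMod p) ≠ 1 := fun h => by
      have : (1 : ZMod p) = 0 := by linear_combination orderOf_eq_one_iff.1 h
      exact one_ne_zero this
    omega
  have hodd : Odd p := by
    have := Nat.le_of_dvd (Nat.sub_pos_of_lt hp.one_lt) hmp
    exact hp.odd_of_ne_two (by omega)
  rcases k with _ | k
  · exact hne p hp (by simpa using hk.symm)
  have hΦ : (cyclotomic n ℤ).eval 2 = p := by
    rw [← Int.natAbs_of_nonneg (cyclotomic_pos' n one_lt_two).le,
      natAbs_cyclotomic_eval_eq_of_forall_prime_dvd hp hodd (hall p hp hpΦ) hpΦ hall]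
  exact h6 (hk.trans (eq_six_of_cyclotomic_eval_two_eq_prime hp hm hmp (hk ▸ hΦ)))

theorem pow_mul_eq_neg_one_of_orderOf_eq {R : Type*} [CommRing R] [IsDomain R] {x : R} {d j : ℕ}
    (hd : d ≠ 0) (hx : orderOf x = 2 * d) (hj : Odd j) : x ^ (d * j) = -1 := by
  have h2 : IsPrimitiveRoot (x ^ d) 2 := by
    have := (hx ▸ IsPrimitiveRoot.orderOf x).pow_of_dvd hd (dvd_mul_left d 2)
    rwa [Nat.mul_div_cancel _ (Nat.pos_of_ne_zero hd)] at this
  rw [pow_mul, h2.eq_neg_one_of_two_right, hj.neg_one_pow]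

theorem dvd_two_pow_add_one_of_orderOf_eq {p d N : ℕ} (hp : p.Prime)
    (hord : orderOf (2 : ZMod p) = 2 * d) (hdN : d ∣ N) (hN : Odd N) : p ∣ 2 ^ N + 1 := by
  have : Fact p.Prime := ⟨hp⟩
  obtain ⟨j, rfl⟩ := hdN
  have hd : d ≠ 0 := by rintro rfl; simp at hN
  rw [← ZMod.natCast_eq_zero_iff]
  push_cast
  rw [pow_mul_eq_neg_one_of_orderOf_eq hd hord (Nat.odd_mul.1 hN).2, neg_add_cancel]

theorem omega_ge_tau_sub_one_general (N : ℕ) (hodd : Odd N) :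
    (2 ^ N + 1).primeFactors.card ≥ N.divisors.card - 1 := by
  have hmem : ∀ d ∈ N.divisors.erase 3,
      2 * d ∈ (2 ^ N + 1).primeFactors.image fun p => orderOf (2 : ZMod p) := by
    intro d hd
    obtain ⟨hd3, hdN, hN⟩ := by simpa only [mem_erase, Nat.mem_divisors] using hd
    have hd0 : d ≠ 0 := ne_zero_of_dvd_ne_zero hN hdN
    obtain ⟨p, hp, hord⟩ := exists_prime_orderOf_two_eq (n := 2 * d) (by omega) (by omega)
    exact mem_image.2 ⟨p, Nat.mem_primeFactors.2
      ⟨hp, dvd_two_pow_add_one_of_orderOf_eq hp hord hdN hodd, by positivity⟩, hord⟩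
  calc N.divisors.card - 1 ≤ (N.divisors.erase 3).card := pred_card_le_card_erase
    _ = ((N.divisors.erase 3).image (2 * ·)).card :=
        (card_image_of_injective _ (mul_right_injective₀ two_ne_zero)).symm
    _ ≤ ((2 ^ N + 1).primeFactors.image fun p => orderOf (2 : ZMod p)).card :=
        card_le_card fun _ h => by
          obtain ⟨d, hd, rfl⟩ := mem_image.1 h
          exact hmem d hd
    _ ≤ (2 ^ N + 1).primeFactors.card := card_image_le

theorem omega_ge_tau_sub_one (N : ℕ) (hN : 0 < N) (hodd : Odd N) :
    (2 ^ N + 1).primeFactors.card ≥ N.divisors.card - 1 :=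
  omega_ge_tau_sub_one_general N hodd
end

section
/- For every positive integer n, the number of distinct prime factors of 2^(3^n) + 1 is at least n. -/
theorem omega_two_pow_three_pow (n : ℕ) (hn : 0 < n) :
    (2 ^ 3 ^ n + 1).primeFactors.card ≥ n := by
  induction n, hn using Nat.le_induction with
  | base =>
    have h3 : 3 ∈ (2 ^ 3 ^ 1 + 1).primeFactors := by
      rw [Nat.mem_primeFactors]
      refine ⟨Nat.prime_three, by norm_num, by norm_num⟩
    calc 1 ≤ (2 ^ 3 ^ 1 + 1).primeFactors.card :=
          Finset.card_pos.mpr ⟨3, h3⟩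
    _ = _ := rfl
  | succ n hn ih =>
    set x : ℕ := 2 ^ 3 ^ n with hx
    -- x = k + 2 for some k
    obtain ⟨k, hk⟩ : ∃ k, x = k + 2 := by
      have : 2 ≤ x := by
        have : (2:ℕ)^1 ≤ 2 ^ 3 ^ n := Nat.pow_le_pow_right (by norm_num)
          (Nat.one_le_iff_ne_zero.mpr (pow_ne_zero n (by norm_num)))
        simpa using this
      exact ⟨x - 2, by omega⟩
    set y : ℕ := x * (x - 1) + 1 with hy
    have hfact : 2 ^ 3 ^ (n+1) + 1 = (x + 1) * y := by
      have h1 : 2 ^ 3 ^ (n+1) = x ^ 3 := by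
        rw [hx, ← pow_mul, pow_succ]
      have h2 : k + 2 - 1 = k + 1 := by omega
      rw [h1, hk, hy, hk, h2]
      ring
    -- x % 9 = 8
    have hxmod : x % 9 = 8 := by
      obtain ⟨r, hr⟩ : ∃ r, 3 ^ n = 6 * r + 3 := by
        obtain ⟨r, hr⟩ : Odd (3 ^ (n - 1)) := Odd.pow ⟨1, by norm_num⟩
        refine ⟨r, ?_⟩
        have h3 : 3 ^ n = 3 * 3 ^ (n - 1) := by
          rw [← pow_succ']
          congr 1
          omega
        omega
      have : x = 64 ^ r * 8 := by
        rw [hx, hr, pow_add, pow_mul]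
        norm_num
      rw [this, Nat.mul_mod, Nat.pow_mod]
      norm_num
    obtain ⟨s, hs⟩ : ∃ s, x = 9 * s + 8 := ⟨x / 9, by omega⟩
    have hy9 : y = 9 * (9 * s ^ 2 + 15 * s + 6) + 3 := by
      rw [hy, hs]
      have : 9 * s + 8 - 1 = 9 * s + 7 := by omega
      rw [this]; ring
    set m : ℕ := 3 * (9 * s ^ 2 + 15 * s + 6) + 1 with hm
    have hym : y = 3 * m := by omega
    have hm1 : m ≠ 1 := by omega
    set p : ℕ := m.minFac with hp
    have hpp : p.Prime := Nat.minFac_prime hm1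
    have hpm : p ∣ m := Nat.minFac_dvd m
    have hp3 : p ≠ 3 := by
      intro h
      have : (3:ℕ) ∣ m := h ▸ hpm
      omega
    have hpy : p ∣ y := hym ▸ hpm.mul_left 3
    have hpa : p ∣ 2 ^ 3 ^ (n+1) + 1 := hfact ▸ hpy.mul_left (x + 1)
    have hpnx : ¬ p ∣ (x + 1) := by
      intro hd
      have hkey : y = (x + 1) * k + 3 := by
        rw [hy, hk]
        have : k + 2 - 1 = k + 1 := by omega
        rw [this]; ring
      have h3' : p ∣ 3 := by
        have := Nat.dvd_sub hpy (hd.mul_right k)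
        rwa [hkey, Nat.add_sub_cancel_left] at this
      have := (Nat.prime_dvd_prime_iff_eq hpp Nat.prime_three).mp h3'
      exact hp3 this
    have hane : 2 ^ 3 ^ (n+1) + 1 ≠ 0 := by positivity
    have hsub : insert p ((x + 1).primeFactors) ⊆ (2 ^ 3 ^ (n+1) + 1).primeFactors := by
      intro q hq
      rcases Finset.mem_insert.mp hq with h | h
      · subst h
        exact Nat.mem_primeFactors.mpr ⟨hpp, hpa, hane⟩
      · refine Nat.primeFactors_mono ?_ hane h
        exact hfact ▸ Dvd.intro y rfl
    have hpni : p ∉ (x + 1).primeFactors := fun h =>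
      hpnx (Nat.mem_primeFactors.mp h).2.1
    calc n + 1 ≤ (x + 1).primeFactors.card + 1 := by
          have := ih; omega
    _ = (insert p ((x + 1).primeFactors)).card :=
          (Finset.card_insert_of_notMem hpni).symm
    _ ≤ (2 ^ 3 ^ (n+1) + 1).primeFactors.card := Finset.card_le_card hsub
end

section
/- Let x be a real number and N a Novák number with 1 < N ≤ x. If k = ω(2^N + 1) is the number of distinct prime factors of 2^N + 1, then the number of Novák numbers not exceeding x is at least (ln(x/N)/N)^k. -/
lemma novak_odd (n : ℕ) (hn0 : 0 < n) : Odd (2 ^ n + 1) :=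
  Even.add_one ((Nat.even_pow' hn0.ne').mpr even_two)

lemma novak_step_s15 (n p : ℕ) (hn : n ∣ 2 ^ n + 1) (hp : p.Prime) (hpd : p ∣ 2 ^ n + 1) :
    n * p ∣ 2 ^ (n * p) + 1 := by
  have hn0 : 0 < n := by
    rcases Nat.eq_zero_or_pos n with rfl | hn0
    · simp at hn
    · exact hn0
  have hodd2 : Odd (2 ^ n + 1) := novak_odd n hn0
  have hpodd : Odd p := by
    rcases hp.eq_two_or_odd' with rfl | hodd
    · have h1 := Nat.odd_iff.mp hodd2
      omega
    · exact hodd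
  -- work in ℤ
  set a : ℤ := 2 ^ n with ha
  have hS : (∑ i ∈ Finset.range p, (-a) ^ i) * (a + 1) = a ^ p + 1 := by
    have := geom_sum_mul (-a) p
    rw [hpodd.neg_pow] at this
    linear_combination -this
  have hpS : (p : ℤ) ∣ ∑ i ∈ Finset.range p, (-a) ^ i := by
    have hpa : (p : ℤ) ∣ (-a) - 1 := by
      have : (p : ℤ) ∣ a + 1 := by
        have := Int.natCast_dvd_natCast.mpr hpd
        push_cast at this
        convert this using 1
      rw [show (-a - 1 : ℤ) = -(a + 1) by ring]
      exact dvd_neg.mpr this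
    have key : (p : ℤ) ∣ (∑ i ∈ Finset.range p, (-a) ^ i) - p := by
      have : (∑ i ∈ Finset.range p, (-a) ^ i) - p
          = ∑ i ∈ Finset.range p, ((-a) ^ i - 1) := by
        rw [Finset.sum_sub_distrib]
        simp
      rw [this]
      refine Finset.dvd_sum fun i _ => ?_
      calc (p : ℤ) ∣ (-a) - 1 := hpa
        _ ∣ (-a) ^ i - 1 ^ i := sub_dvd_pow_sub_pow _ _ _
        _ = (-a) ^ i - 1 := by rw [one_pow]
    have := dvd_add key (dvd_refl (p : ℤ))
    simpa using this
  have hdvdZ : ((n : ℤ) * p) ∣ a ^ p + 1 := by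
    rw [← hS]
    have h1 : (n : ℤ) ∣ a + 1 := by
      have := Int.natCast_dvd_natCast.mpr hn
      push_cast at this
      convert this using 1
    calc ((n : ℤ) * p) ∣ (a + 1) * p := mul_dvd_mul h1 dvd_rfl
      _ ∣ (a + 1) * ∑ i ∈ Finset.range p, (-a) ^ i := mul_dvd_mul_left _ hpS
      _ = (∑ i ∈ Finset.range p, (-a) ^ i) * (a + 1) := mul_comm _ _
  have : ((n * p : ℕ) : ℤ) ∣ ((2 ^ (n * p) + 1 : ℕ) : ℤ) := by
    push_cast
    rw [pow_mul]
    exact hdvdZ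
  exact_mod_cast this

lemma novak_mult (N : ℕ) (hN0 : 0 < N) (h : N ∣ 2 ^ N + 1) :
    ∀ m : ℕ, Odd m → (∀ p : ℕ, p.Prime → p ∣ m → p ∣ 2 ^ N + 1) →
      N * m ∣ 2 ^ (N * m) + 1 := by
  intro m
  induction m using Nat.strong_induction_on with
  | _ m IH =>
    intro hm hprimes
    rcases eq_or_ne m 1 with rfl | hm1
    · simpa using h
    have hm0 : m ≠ 0 := by rintro rfl; simp [Nat.odd_iff] at hm
    set p := m.minFac with hp
    have hpp : p.Prime := Nat.minFac_prime hm1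
    have hpdvd : p ∣ m := Nat.minFac_dvd m
    set m' := m / p with hm'
    have hmeq : m = p * m' := (Nat.mul_div_cancel' hpdvd).symm
    have hm'lt : m' < m := Nat.div_lt_self (Nat.pos_of_ne_zero hm0) hpp.one_lt
    have hm'dvd : m' ∣ m := ⟨p, by rw [hmeq]; ring⟩
    have hm'odd : Odd m' := hm.of_dvd_nat hm'dvd
    have IH' : N * m' ∣ 2 ^ (N * m') + 1 :=
      IH m' hm'lt hm'odd fun q hq hqd => hprimes q hq (hqd.trans hm'dvd)
    have hpd2 : p ∣ 2 ^ (N * m') + 1 := by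
      have h1 : p ∣ 2 ^ N + 1 := hprimes p hpp hpdvd
      have h2 : 2 ^ N + 1 ∣ 2 ^ (N * m') + 1 := by
        have := Odd.add_dvd_pow_add_pow (2 ^ N : ℤ) 1 hm'odd
        rw [one_pow, ← pow_mul] at this
        exact_mod_cast this
      exact h1.trans h2
    have hfin := novak_step_s15 (N * m') p IH' hpp hpd2
    rwa [show N * m' * p = N * m by rw [hmeq]; ring] at hfin


lemma novak_prod_factorization (s : Finset ℕ) (hs : ∀ p ∈ s, p.Prime) (c : ↥s → ℕ)
    (q : ↥s) : (∏ p ∈ s.attach, (p : ℕ) ^ c p).factorization (q : ℕ) = c q := by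
  rw [Nat.factorization_prod (fun p _ => pow_ne_zero _ (hs p.1 p.2).pos.ne')]
  rw [Finsupp.finset_sum_apply]
  rw [Finset.sum_eq_single q]
  · rw [(hs q.1 q.2).factorization_pow, Finsupp.single_apply, if_pos rfl]
  · intro b _ hbq
    rw [(hs b.1 b.2).factorization_pow, Finsupp.single_apply, if_neg]
    exact fun hc => hbq (Subtype.ext hc)
  · intro hq; exact absurd (Finset.mem_attach s q) hq


/-- The number of Novák numbers (positive integers `n` with `n ∣ 2^n + 1`)
not exceeding the real number `x`. -/
noncomputable def novakCount (x : ℝ) : ℕ :=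
  ((Finset.Icc 1 ⌊x⌋₊).filter fun n => n ∣ 2 ^ n + 1).card

theorem novak_count_lower_bound (x : ℝ) (N : ℕ) (hN : 1 < N) (hNx : (N : ℝ) ≤ x)
    (h : N ∣ 2 ^ N + 1) (hlog : 0 ≤ Real.log (x / N)) :
    (Real.log (x / N) / N) ^ (2 ^ N + 1).primeFactors.card ≤ (novakCount x : ℝ) := by
  set s := (2 ^ N + 1).primeFactors with hs
  have hsp : ∀ p ∈ s, p.Prime := fun p hp => Nat.prime_of_mem_primeFactors hp
  set L := Real.log (x / N) with hL
  set R := ∏ p ∈ s, p with hR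
  have hRdvd : R ∣ 2 ^ N + 1 := Nat.prod_primeFactors_dvd _
  have hNpos : 0 < N := by omega
  have hx0 : (0 : ℝ) < x := lt_of_lt_of_le (by exact_mod_cast hNpos) hNx
  have hNodd : Odd N := (novak_odd N hNpos).of_dvd_nat h
  have hN3 : 3 ≤ N := by have := Nat.odd_iff.mp hNodd; omega
  have h2N1 : 1 < 2 ^ N + 1 := by have := Nat.one_le_two_pow (n := N); omega
  have hR2 : 2 ≤ R := by
    obtain ⟨p, hp⟩ := (Nat.nonempty_primeFactors.mpr h2N1)
    have hpR : p ∣ R := Finset.dvd_prod_of_mem _ hp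
    have hRpos : 0 < R := Finset.prod_pos fun q hq => (hsp q hq).pos
    exact le_trans (hsp p hp).two_le (Nat.le_of_dvd hRpos hpR)
  set S := Real.log R with hS
  have hSpos : 0 < S := Real.log_pos (by exact_mod_cast hR2)
  have hSN : S ≤ (N : ℝ) := by
    have hRle : (R : ℝ) ≤ 2 ^ N + 1 := by
      exact_mod_cast Nat.le_of_dvd (by omega) hRdvd
    have h1 : S ≤ Real.log (2 ^ N + 1) :=
      Real.log_le_log (by exact_mod_cast Nat.lt_of_lt_of_le Nat.zero_lt_two hR2) hRle
    have h2 : (2 : ℝ) ^ N + 1 ≤ 2 ^ (N + 1) := by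
      have : (1 : ℝ) ≤ 2 ^ N := by exact_mod_cast Nat.one_le_two_pow (n := N)
      rw [pow_succ]; nlinarith
    have h3 : Real.log ((2 : ℝ) ^ N + 1) ≤ (N + 1) * Real.log 2 := by
      calc Real.log ((2 : ℝ) ^ N + 1) ≤ Real.log (2 ^ (N + 1)) :=
            Real.log_le_log (by positivity) h2
        _ = (N + 1) * Real.log 2 := by rw [Real.log_pow]; push_cast; ring
    have h4 : ((N : ℝ) + 1) * Real.log 2 ≤ N := by
      have hl2 : Real.log 2 < 0.6931471808 := Real.log_two_lt_d9
      have hl2' : 0 < Real.log 2 := Real.log_pos (by norm_num)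
      have hN3' : (3 : ℝ) ≤ N := by exact_mod_cast hN3
      nlinarith
    linarith
  set A := ⌊L / S⌋₊ with hA
  have hAL : (A : ℝ) * S ≤ L := by
    have h1 : (A : ℝ) ≤ L / S := Nat.floor_le (div_nonneg hlog hSpos.le)
    calc (A : ℝ) * S ≤ (L / S) * S := mul_le_mul_of_nonneg_right h1 hSpos.le
      _ = L := div_mul_cancel₀ _ hSpos.ne'
  have hLA : L / N < (A : ℝ) + 1 := by
    have l1 : L / N ≤ L / S := div_le_div_of_nonneg_left hlog hSpos hSN
    have l2 : L / S < (A : ℝ) + 1 := Nat.lt_floor_add_one _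
    linarith
  set T := ((Finset.Icc 1 ⌊x⌋₊).filter fun n => n ∣ 2 ^ n + 1) with hT
  set f : (↥s → Fin (A + 1)) → ℕ :=
    fun a => N * ∏ p ∈ s.attach, (p : ℕ) ^ (a p : ℕ) with hf
  have hpodd : ∀ p : ↥s, Odd (p : ℕ) :=
    fun p => (novak_odd N hNpos).of_dvd_nat (Nat.dvd_of_mem_primeFactors p.2)
  have hmaps : ∀ a ∈ (Finset.univ : Finset (↥s → Fin (A + 1))), f a ∈ T := by
    intro a _
    set m := ∏ p ∈ s.attach, (p : ℕ) ^ (a p : ℕ) with hm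
    have hm0 : 0 < m := Finset.prod_pos fun p _ => pow_pos (hsp p.1 p.2).pos _
    have hmodd : Odd m :=
      Finset.prod_induction _ Odd (fun _ _ => Odd.mul) odd_one
        (fun p _ => (hpodd p).pow)
    have hmprimes : ∀ q : ℕ, q.Prime → q ∣ m → q ∣ 2 ^ N + 1 := by
      intro q hq hqm
      obtain ⟨p, -, hpq⟩ := hq.prime.exists_mem_finset_dvd hqm
      have : q ∣ (p : ℕ) := hq.dvd_of_dvd_pow hpq
      have : q = (p : ℕ) := ((Nat.prime_dvd_prime_iff_eq hq (hsp p.1 p.2)).mp this)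
      rw [this]
      exact Nat.dvd_of_mem_primeFactors p.2
    have hdvd : f a ∣ 2 ^ (f a) + 1 := novak_mult N hNpos h m hmodd hmprimes
    have hfx : (f a : ℝ) ≤ x := by
      have hprod : (m : ℝ) ≤ (R : ℝ) ^ A := by
        have hnat : m ≤ R ^ A := by
          calc m ≤ ∏ p ∈ s.attach, (p : ℕ) ^ A :=
                Finset.prod_le_prod' fun p _ =>
                  Nat.pow_le_pow_right (hsp p.1 p.2).pos (Fin.is_le _)
            _ = R ^ A := by rw [Finset.prod_pow]; exact congrArg (· ^ A) (s.prod_attach id)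
        exact_mod_cast hnat
      have hRA : (R : ℝ) ^ A ≤ x / N := by
        have hxN : (0 : ℝ) < x / N := div_pos hx0 (by exact_mod_cast hNpos)
        have hRpos : (0 : ℝ) < (R : ℝ) := by exact_mod_cast Nat.lt_of_lt_of_le Nat.zero_lt_two hR2
        rw [← Real.log_le_log_iff (by positivity) hxN]
        rw [Real.log_pow]
        exact hAL
      have hfm : f a = N * m := rfl
      rw [hfm]
      push_cast
      calc (N : ℝ) * m ≤ (N : ℝ) * (x / N) := by
            apply mul_le_mul_of_nonneg_left _ (by positivity)
            exact hprod.trans hRA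
        _ = x := by field_simp
    rw [hT, Finset.mem_filter, Finset.mem_Icc]
    refine ⟨⟨?_, Nat.le_floor hfx⟩, hdvd⟩
    exact Nat.one_le_iff_ne_zero.mpr (by positivity)
  have hinj : Set.InjOn f (Finset.univ : Finset (↥s → Fin (A + 1))) := by
    intro a _ b _ hab
    have hprods : (∏ p ∈ s.attach, (p : ℕ) ^ (a p : ℕ))
        = ∏ p ∈ s.attach, (p : ℕ) ^ (b p : ℕ) :=
      Nat.eq_of_mul_eq_mul_left hNpos hab
    funext q
    have e1 := novak_prod_factorization s hsp (fun p => (a p : ℕ)) q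
    have e2 := novak_prod_factorization s hsp (fun p => (b p : ℕ)) q
    apply Fin.ext
    rw [← e1, ← e2, hprods]
  have hcard : (A + 1) ^ s.card ≤ T.card := by
    calc (A + 1) ^ s.card = Fintype.card (↥s → Fin (A + 1)) := by
          rw [Fintype.card_fun, Fintype.card_fin, Fintype.card_coe]
      _ = (Finset.univ : Finset (↥s → Fin (A + 1))).card := Finset.card_univ.symm
      _ ≤ T.card := Finset.card_le_card_of_injOn f hmaps hinj
  have hfinal : ((A : ℝ) + 1) ^ s.card ≤ (novakCount x : ℝ) := by
    have : (novakCount x : ℕ) = T.card := rfl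
    rw [this]
    exact_mod_cast hcard
  calc (L / N) ^ s.card ≤ ((A : ℝ) + 1) ^ s.card :=
        pow_le_pow_left₀ (div_nonneg hlog (by positivity)) hLA.le _
    _ ≤ (novakCount x : ℝ) := hfinal
end

section
/- A positive integer n satisfies a^n ≡ 1 (mod n) for every integer a coprime to n if and only if p - 1 divides n for every prime p dividing n. -/
/-!
The condition says that the exponent of `(ZMod n)ˣ`, i.e. the Carmichael function `λ n`,
divides `n`. If `p ∣ n` then `λ p = p - 1` divides `λ n`. Conversely `λ n` is the lcm of the
`λ (p ^ k)` over the prime powers `p ^ k ∥ n`, and `λ (p ^ k) ∣ φ (p ^ k) = p ^ (k - 1) * (p - 1)`,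
which divides `n` as soon as `p - 1` does, since `p ^ (k - 1)` and `p - 1` are coprime.
-/

open Nat ArithmeticFunction

theorem forall_isCoprime_pow_modEq_one_iff_carmichael_dvd {n : ℕ} [NeZero n] {m : ℕ} :
    (∀ a : ℤ, IsCoprime a n → a ^ m ≡ 1 [ZMOD n]) ↔ carmichael n ∣ m := by
  rw [carmichael_eq_exponent', Monoid.exponent_dvd_iff_forall_pow_eq_one]
  constructor
  · intro h u
    have hu : (((u : ZMod n).cast : ℤ) : ZMod n) = u := ZMod.intCast_zmod_cast _
    have hcop : IsCoprime ((u : ZMod n).cast : ℤ) n :=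
      isCoprime_comm.mp <| (ZMod.coe_int_isUnit_iff_isCoprime _ n).mp (by rw [hu]; exact u.isUnit)
    have hpow := (ZMod.intCast_eq_intCast_iff _ _ n).mpr (h _ hcop)
    push_cast [hu] at hpow
    exact Units.ext hpow
  · intro h a ha
    have hpow := congrArg Units.val (h (ZMod.unitOfIsCoprime a ha))
    rw [Units.val_pow_eq_pow_val, ZMod.coe_unitOfIsCoprime, Units.val_one] at hpow
    exact (ZMod.intCast_eq_intCast_iff _ _ n).mp (by push_cast; exact hpow)

theorem carmichael_prime {p : ℕ} (hp : p.Prime) : carmichael p = p - 1 := by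
  have : Fact p.Prime := ⟨hp⟩
  rw [carmichael_eq_exponent hp.ne_zero, IsCyclic.exponent_eq_card, Nat.card_eq_fintype_card,
    ZMod.card_units]

theorem totient_ordProj_dvd {n p : ℕ} (hp : p.Prime) (h : p - 1 ∣ n) :
    φ (p ^ n.factorization p) ∣ n := by
  rcases Nat.eq_zero_or_pos (n.factorization p) with hk | hk
  · simp [hk]
  rw [totient_prime_pow hp hk]
  have hcop : Coprime (p ^ (n.factorization p - 1)) (p - 1) :=
    Coprime.pow_left _ <| (coprime_self_sub_right hp.one_le).mpr (coprime_one_right p)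
  exact hcop.mul_dvd_of_dvd_of_dvd ((pow_dvd_pow p (sub_le _ 1)).trans (ordProj_dvd n p)) h

theorem carmichael_dvd_self_iff {n : ℕ} [NeZero n] :
    carmichael n ∣ n ↔ ∀ p : ℕ, p.Prime → p ∣ n → p - 1 ∣ n := by
  constructor
  · intro h p hp hpn
    exact carmichael_prime hp ▸ (carmichael_dvd hpn).trans h
  · intro h
    rw [carmichael_factorization]
    refine Finset.lcm_dvd fun p hp => ?_
    have hp' := prime_of_mem_primeFactors hp
    exact (carmichael_dvd_totient _).trans
      (totient_ordProj_dvd hp' (h p hp' (dvd_of_mem_primeFactors hp)))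

theorem novak_carmichael_criterion (n : ℕ) (hn : 0 < n) :
    (∀ a : ℤ, IsCoprime a (n : ℤ) → a ^ n ≡ 1 [ZMOD (n : ℕ)]) ↔
      ∀ p : ℕ, p.Prime → p ∣ n → (p - 1) ∣ n := by
  have : NeZero n := ⟨hn.ne'⟩
  rw [forall_isCoprime_pow_modEq_one_iff_carmichael_dvd, carmichael_dvd_self_iff]
end

section
/- Let N be an odd Novák number such that 2N is a Novák–Carmichael number. Then every prime factor p of N satisfies p ≡ 3 (mod 8). -/
theorem novak_carmichael_prime_factors (N : ℕ) (hN : 0 < N) (hNodd : Odd N)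
    (hnovak : N ∣ 2 ^ N + 1)
    (hcarm : ∀ a : ℤ, IsCoprime a ((2 * N : ℕ) : ℤ) → a ^ (2 * N) ≡ 1 [ZMOD (2 * N : ℕ)]) :
    ∀ p : ℕ, p.Prime → p ∣ N → p % 8 = 3 := by
  intro p hp hpN
  have hp2 : p ≠ 2 := by
    rintro rfl
    exact (Nat.odd_iff.mp hNodd).symm.trans_ne (by
      obtain ⟨c, rfl⟩ := hpN; simp [Nat.mul_mod_right]) rfl
  haveI : Fact p.Prime := ⟨hp⟩
  -- Step 1: 2^N = -1 in ZMod p, hence -2 is a square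
  have hpow : (2 : ZMod p) ^ N = -1 := by
    have hdvd : p ∣ 2 ^ N + 1 := hpN.trans hnovak
    have : ((2 ^ N + 1 : ℕ) : ZMod p) = 0 := (ZMod.natCast_eq_zero_iff _ _).mpr hdvd
    push_cast at this
    linear_combination this
  have hsq : IsSquare (-2 : ZMod p) := by
    refine ⟨(-2) ^ ((N + 1) / 2), ?_⟩
    have h2 : (N + 1) / 2 * 2 = N + 1 := by
      obtain ⟨j, rfl⟩ := hNodd; omega
    have : ((-2 : ZMod p)) ^ ((N + 1) / 2) * ((-2)) ^ ((N + 1) / 2) = (-2) ^ (N + 1) := by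
      rw [← pow_add]; congr 1; omega
    rw [this, pow_succ, hNodd.neg_pow, hpow]
    ring
  have h13 : p % 8 = 1 ∨ p % 8 = 3 := (ZMod.exists_sq_eq_neg_two_iff hp2).mp hsq
  -- Step 2: p - 1 ∣ 2 * N
  have h2N : 2 * N ≠ 0 := by positivity
  set k : ℕ := (2 * N).factorization p with hk
  set m : ℕ := (2 * N) / p ^ k with hm
  have hcop : p.Coprime m := Nat.coprime_ordCompl hp h2N
  have hunits : ∀ u : (ZMod p)ˣ, u ^ (2 * N) = 1 := by
    intro u
    obtain ⟨a, ha1, ha2⟩ := Nat.chineseRemainder hcop ((u : ZMod p).val) 1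
    have hap : ¬ p ∣ a := by
      intro hdvd
      have : ((u : ZMod p).val : ZMod p) = 0 := by
        rw [(ZMod.natCast_eq_natCast_iff _ _ _).mpr ha1.symm,
          ZMod.natCast_eq_zero_iff]
        exact hdvd
      rw [ZMod.natCast_val, ZMod.cast_id] at this
      exact u.ne_zero this
    have ham : a.Coprime m := by
      have : a % m = 1 % m := ha2
      have h1 : Nat.gcd a m = Nat.gcd 1 m := by
        rw [Nat.gcd_comm a m, Nat.gcd_comm 1 m, Nat.gcd_rec m a, Nat.gcd_rec m 1, this]
      simpa [Nat.Coprime] using h1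
    have hcopa : a.Coprime (2 * N) := by
      have : a.Coprime (p ^ k * m) :=
        Nat.Coprime.mul_right (((hp.coprime_iff_not_dvd).mpr hap).symm.pow_right k) ham
      rwa [Nat.ordProj_mul_ordCompl_eq_self] at this
    have hmod := hcarm (a : ℤ) (by rwa [Nat.isCoprime_iff_coprime])
    have hmodp : (a : ℤ) ^ (2 * N) ≡ 1 [ZMOD (p : ℤ)] := by
      refine Int.ModEq.of_dvd ?_ hmod
      exact_mod_cast Int.natCast_dvd_natCast.mpr (Dvd.dvd.mul_left hpN 2)
    have hzmod : ((a : ℤ) : ZMod p) ^ (2 * N) = 1 := by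
      have := (ZMod.intCast_eq_intCast_iff _ _ _).mpr hmodp
      push_cast at this
      exact_mod_cast this
    have hau : ((a : ℕ) : ZMod p) = (u : ZMod p) := by
      rw [(ZMod.natCast_eq_natCast_iff _ _ _).mpr ha1, ZMod.natCast_val, ZMod.cast_id]
    ext
    push_cast
    rw [← hau]
    simpa using hzmod
  have hexp : (p - 1) ∣ 2 * N := by
    have h1 : Monoid.exponent (ZMod p)ˣ ∣ 2 * N :=
      Monoid.exponent_dvd_of_forall_pow_eq_one hunits
    have h2 : Monoid.exponent (ZMod p)ˣ = p - 1 := by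
      rw [IsCyclic.exponent_eq_card, Nat.card_eq_fintype_card, ZMod.card_units_eq_totient,
        Nat.totient_prime hp]
    rwa [h2] at h1
  -- Step 3: exclude p % 8 = 1
  rcases h13 with h1 | h3
  · exfalso
    have h8 : (8 : ℕ) ∣ p - 1 := by omega
    have : (8 : ℕ) ∣ 2 * N := h8.trans hexp
    obtain ⟨c, hc⟩ := this
    obtain ⟨j, hj⟩ := hNodd
    omega
  · exact h3
end
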